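/- Let X be an n-independent set of d(n,k−1)+2 points all lying on an algebraic curve of degree k, with k ≤ n. Then this curve is the unique curve of degree k passing through all points of X; i.e., any two polynomials of degree ≤ k vanishing on X and of exact degree k define the same curve (are proportional). -/

import Mathlib

open MvPolynomial
open scoped Classical

/-- Evaluation of a bivariate polynomial at a point of the plane. -/
noncomputable def evalPt (p : MvPolynomial (Fin 2) ℝ) (A : ℝ × ℝ) : ℝ :=
  MvPolynomial.eval ![A.1, A.2] p

/-- `p` is an `n`-fundamental polynomial of the node `A` with respect to the node set `X`. -/
def IsFund (n : ℕ) (X : Finset (ℝ × ℝ)) (A : ℝ × ℝ)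
    (p : MvPolynomial (Fin 2) ℝ) : Prop :=
  p.totalDegree ≤ n ∧ evalPt p A = 1 ∧ ∀ B ∈ X, B ≠ A → evalPt p B = 0

/-- The node set `X` is `n`-independent. -/
def Indep (n : ℕ) (X : Finset (ℝ × ℝ)) : Prop :=
  ∀ A ∈ X, ∃ p, IsFund n X A p

/-- `d(n,k) = N_n - N_{n-k} = k(2n+3-k)/2`. -/
def dd (n k : ℕ) : ℕ := k * (2 * n + 3 - k) / 2

/-- The node set `X` is `n`-poised. -/
def Poised (n : ℕ) (X : Finset (ℝ × ℝ)) : Prop :=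
  X.card = (n + 1) * (n + 2) / 2 ∧
  ∀ p : MvPolynomial (Fin 2) ℝ, p.totalDegree ≤ n →
    (∀ A ∈ X, evalPt p A = 0) → p = 0

/-- The space of polynomials of total degree at most `n` vanishing on `X`. -/
noncomputable def vanishSp (n : ℕ) (X : Finset (ℝ × ℝ)) :
    Submodule ℝ (MvPolynomial (Fin 2) ℝ) :=
  MvPolynomial.restrictTotalDegree (Fin 2) ℝ n ⊓
    ⨅ A ∈ X, LinearMap.ker ((MvPolynomial.aeval (R := ℝ) ![A.1, A.2]).toLinearMap)

/-!
Write `N m = (m + 2).choose 2` for the dimension of `Π_m`. If `p₂ ∤ p₁`, factor `p₁ = c a`,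
`p₂ = c b` with `a, b` coprime; equal degrees make `b` nonconstant. Both `p₁ Π_{n-k}` and
`p₂ Π_{n-k}` lie in the space of polynomials of `Π_n` vanishing on `X`, which by
`n`-independence has dimension `N n - |X| = N (n-k+1) - 2 = N (n-k) + (n-k)`. Their intersection
is `p₁` times the multiples of `b` in `Π_{n-k}`, of dimension at most `N (n-k) - (n-k+1)`, so
their sum has dimension at least `N (n-k) + (n-k+1)`: a contradiction. So `p₂ ∣ p₁`, and
since the degrees agree the quotient is a nonzero constant.
-/

open Finset Module

theorem Nat.add_one_choose_two (m : ℕ) : (m + 1).choose 2 = m.choose 2 + m := by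
  rw [Nat.choose_succ_succ, Nat.choose_one_right, add_comm]

theorem Finsupp.setOf_sum_le_eq_biUnion {σ : Type*} [Fintype σ] [DecidableEq σ] (m : ℕ) :
    {d : σ →₀ ℕ | (d.sum fun _ e => e) ≤ m} =
      ((range (m + 1)).biUnion fun j => (univ : Finset σ).finsuppAntidiag j :
        Set (σ →₀ ℕ)) := by
  ext d
  simp [Finsupp.sum_fintype]

namespace MvPolynomial

theorem finrank_restrictTotalDegree {σ K : Type*} [Fintype σ] [Field K] (m : ℕ) :
    finrank K (restrictTotalDegree σ K m) = (m + Fintype.card σ).choose (Fintype.card σ) := by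
  classical
  rw [restrictTotalDegree, finrank_eq_nat_card_basis (basisRestrictSupport K _),
    Finsupp.setOf_sum_le_eq_biUnion, Nat.card_coe_set_eq, Set.ncard_coe_finset, card_biUnion,
    ← Nat.sum_range_multichoose]
  · simp [card_finsuppAntidiag_nat_eq_multichoose]
  · intro i _ j _ hij
    simp only [Function.onFun, disjoint_left, mem_finsuppAntidiag]
    grind

theorem finrank_restrictTotalDegree_fin_two {K : Type*} [Field K] (m : ℕ) :
    finrank K (restrictTotalDegree (Fin 2) K m) = (m + 2).choose 2 := by
  rw [finrank_restrictTotalDegree, Fintype.card_fin]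

section Divisibility

variable {σ K : Type*} [Field K]

theorem eq_zero_of_totalDegree_eq_zero {p : MvPolynomial σ K} (hp : p.totalDegree = 0)
    {x : σ → K} (hx : eval x p = 0) : p = 0 := by
  rw [totalDegree_eq_zero_iff_eq_C.mp hp, eval_C] at hx
  rw [totalDegree_eq_zero_iff_eq_C.mp hp, hx, map_zero]

theorem isUnit_of_totalDegree_eq_zero {p : MvPolynomial σ K} (hp : p.totalDegree = 0)
    (h0 : p ≠ 0) : IsUnit p := by
  rw [totalDegree_eq_zero_iff_eq_C.mp hp] at h0 ⊢
  exact (Ne.isUnit fun h => h0 (by rw [h, map_zero])).map C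

theorem exists_smul_eq_of_dvd_of_totalDegree_eq {p q : MvPolynomial σ K} (hp : p ≠ 0)
    (hdvd : q ∣ p) (hdeg : p.totalDegree = q.totalDegree) :
    ∃ c : K, c ≠ 0 ∧ q = c • p := by
  obtain ⟨u, rfl⟩ := hdvd
  obtain ⟨hq, hu⟩ := mul_ne_zero_iff.mp hp
  have hu0 : u.totalDegree = 0 := by
    rw [totalDegree_mul_of_isDomain hq hu] at hdeg
    omega
  obtain ⟨c, rfl⟩ : ∃ c, u = C c := ⟨_, totalDegree_eq_zero_iff_eq_C.mp hu0⟩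
  have hc : c ≠ 0 := fun h => hu (by rw [h, map_zero])
  refine ⟨c⁻¹, inv_ne_zero hc, ?_⟩
  rw [mul_comm, ← smul_eq_C_mul, smul_smul, inv_mul_cancel₀ hc, one_smul]

theorem finrank_map_mulLeft {p : MvPolynomial σ K} (hp : p ≠ 0)
    (S : Submodule K (MvPolynomial σ K)) :
    finrank K (S.map (LinearMap.mulLeft K p)) = finrank K S :=
  (Submodule.equivMapOfInjective _ (mul_right_injective₀ hp) S).finrank_eq.symm

theorem map_mulLeft_inf_map_mulLeft_le {a b c : MvPolynomial σ K} (hc : c ≠ 0)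
    (hab : IsRelPrime a b) (S : Submodule K (MvPolynomial σ K)) :
    S.map (LinearMap.mulLeft K (c * a)) ⊓ S.map (LinearMap.mulLeft K (c * b)) ≤
      (S ⊓ (Ideal.span {b}).restrictScalars K).map (LinearMap.mulLeft K (c * a)) := by
  rintro x ⟨⟨r, hr, rfl⟩, ⟨s, hs, hrs⟩⟩
  simp only [LinearMap.mulLeft_apply, mul_assoc] at hrs ⊢
  have hbr : b ∣ a * r := ⟨s, (mul_left_cancel₀ hc hrs).symm⟩
  exact ⟨r, ⟨hr, Ideal.mem_span_singleton.mpr (hab.symm.dvd_of_dvd_mul_left hbr)⟩, by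
    simp only [LinearMap.mulLeft_apply, mul_assoc]⟩

theorem restrictTotalDegree_inf_span_le {b : MvPolynomial σ K} (hb : b ≠ 0) (m : ℕ) :
    restrictTotalDegree σ K m ⊓ (Ideal.span {b}).restrictScalars K ≤
      (restrictTotalDegree σ K (m - b.totalDegree)).map (LinearMap.mulLeft K b) := by
  rintro r ⟨hr, hbr⟩
  obtain ⟨u, rfl⟩ := Ideal.mem_span_singleton.mp hbr
  rcases eq_or_ne u 0 with rfl | hu
  · rw [mul_zero]; exact zero_mem _
  rw [SetLike.mem_coe, mem_restrictTotalDegree, totalDegree_mul_of_isDomain hb hu] at hr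
  exact ⟨u, (mem_restrictTotalDegree _ _ _).mpr (by omega), rfl⟩

theorem restrictTotalDegree_inf_span_eq_bot {b : MvPolynomial σ K} {m : ℕ}
    (hm : m < b.totalDegree) :
    restrictTotalDegree σ K m ⊓ (Ideal.span {b}).restrictScalars K = ⊥ := by
  refine eq_bot_iff.mpr fun r ⟨hr, hbr⟩ => (Submodule.mem_bot K).mpr ?_
  by_contra hr0
  have := totalDegree_le_of_dvd_of_isDomain (Ideal.mem_span_singleton.mp hbr) hr0
  rw [SetLike.mem_coe, mem_restrictTotalDegree] at hr
  omega

end Divisibility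

section FinTwo

variable {K : Type*} [Field K]

theorem finrank_restrictTotalDegree_inf_span_add_le {b : MvPolynomial (Fin 2) K}
    (hb : 0 < b.totalDegree) (m : ℕ) :
    finrank K ↥(restrictTotalDegree (Fin 2) K m ⊓ (Ideal.span {b}).restrictScalars K) +
      (m + 1) ≤ (m + 2).choose 2 := by
  have hstep : (m + 2).choose 2 = (m + 1).choose 2 + (m + 1) := Nat.add_one_choose_two (m + 1)
  rcases lt_or_ge m b.totalDegree with hm | hm
  · rw [restrictTotalDegree_inf_span_eq_bot hm, finrank_bot]
    omega
  have hb0 : b ≠ 0 := by rintro rfl; simp at hb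
  calc _ ≤ finrank K (restrictTotalDegree (Fin 2) K (m - b.totalDegree)) + (m + 1) := by
        gcongr
        exact (Submodule.finrank_mono (restrictTotalDegree_inf_span_le hb0 m)).trans
          (Submodule.finrank_map_le _ _)
    _ ≤ (m + 1).choose 2 + (m + 1) := by
        rw [finrank_restrictTotalDegree_fin_two]
        exact Nat.add_le_add_right
          (Nat.choose_le_choose 2 (show m - b.totalDegree + 2 ≤ m + 1 by omega)) _
    _ = (m + 2).choose 2 := hstep.symm

theorem le_finrank_map_mulLeft_sup {p₁ p₂ : MvPolynomial (Fin 2) K} (hp₂ : p₂ ≠ 0)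
    (hp₁ : p₁ ≠ 0) (hdvd : ¬ p₂ ∣ p₁) (m : ℕ) :
    (m + 2).choose 2 + (m + 1) ≤
      finrank K ↥((restrictTotalDegree (Fin 2) K m).map (LinearMap.mulLeft K p₁) ⊔
        (restrictTotalDegree (Fin 2) K m).map (LinearMap.mulLeft K p₂)) := by
  obtain ⟨a, b, c, hab, rfl, rfl⟩ :=
    UniqueFactorizationMonoid.exists_reduced_factors' p₁ p₂ hp₂
  obtain ⟨hc, hb⟩ := mul_ne_zero_iff.mp hp₂
  have hbdeg : 0 < b.totalDegree := by
    refine Nat.pos_of_ne_zero fun h => hdvd ?_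
    exact mul_dvd_mul_left c (isUnit_of_totalDegree_eq_zero h hb).dvd
  have hinf := (Submodule.finrank_mono (map_mulLeft_inf_map_mulLeft_le hc hab
    (restrictTotalDegree (Fin 2) K m))).trans_eq (finrank_map_mulLeft hp₁ _)
  have hsum := Submodule.finrank_sup_add_finrank_inf_eq
    ((restrictTotalDegree (Fin 2) K m).map (LinearMap.mulLeft K (c * a)))
    ((restrictTotalDegree (Fin 2) K m).map (LinearMap.mulLeft K (c * b)))
  rw [finrank_map_mulLeft hp₁, finrank_map_mulLeft hp₂,
    finrank_restrictTotalDegree_fin_two] at hsum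
  have hmultiples := finrank_restrictTotalDegree_inf_span_add_le hbdeg m
  omega

end FinTwo

end MvPolynomial

theorem dd_add_choose_two {n j : ℕ} (h : j ≤ n) :
    dd n j + (n - j + 2).choose 2 = (n + 2).choose 2 := by
  obtain ⟨a, rfl⟩ := Nat.exists_eq_add_of_le h
  have hdd : 2 * dd (j + a) j = j * (j + 1) + 2 * (j * (a + 1)) := by
    have hnum : j * (2 * (j + a) + 3 - j) = j * (j + 1) + 2 * (j * (a + 1)) := by
      rw [show 2 * (j + a) + 3 - j = j + 2 * a + 3 by omega]; ring
    rw [dd, hnum, Nat.mul_div_cancel']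
    exact dvd_add (Nat.even_mul_succ_self j).two_dvd (dvd_mul_right _ _)
  have h1 := Nat.add_one_mul_choose_eq (a + 1) 1
  have h2 := Nat.add_one_mul_choose_eq (j + a + 1) 1
  rw [Nat.choose_one_right] at h1 h2
  rw [Nat.add_sub_cancel_left]
  apply Nat.eq_of_mul_eq_mul_left two_pos
  rw [mul_add, hdd]
  linarith

theorem mem_vanishSp {n : ℕ} {X : Finset (ℝ × ℝ)} {p : MvPolynomial (Fin 2) ℝ} :
    p ∈ vanishSp n X ↔ p.totalDegree ≤ n ∧ ∀ A ∈ X, evalPt p A = 0 := by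
  simp [vanishSp, mem_restrictTotalDegree, evalPt]

theorem map_mulLeft_le_vanishSp {n : ℕ} {X : Finset (ℝ × ℝ)} {p : MvPolynomial (Fin 2) ℝ}
    (hp : p.totalDegree ≤ n) (hv : ∀ A ∈ X, evalPt p A = 0) :
    (restrictTotalDegree (Fin 2) ℝ (n - p.totalDegree)).map (LinearMap.mulLeft ℝ p) ≤
      vanishSp n X := by
  rintro _ ⟨r, hr, rfl⟩
  rw [SetLike.mem_coe, mem_restrictTotalDegree] at hr
  refine mem_vanishSp.mpr ⟨(totalDegree_mul p r).trans (by omega), fun A hA => ?_⟩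
  simp only [LinearMap.mulLeft_apply, evalPt, map_mul] at hv ⊢
  rw [hv A hA, zero_mul]

noncomputable def evalOn (X : Finset (ℝ × ℝ)) :
    MvPolynomial (Fin 2) ℝ →ₗ[ℝ] (X → ℝ) :=
  LinearMap.pi fun A => (aeval ![A.1.1, A.1.2]).toLinearMap

theorem vanishSp_eq_map_ker (n : ℕ) (X : Finset (ℝ × ℝ)) :
    vanishSp n X = (LinearMap.ker ((evalOn X).domRestrict (restrictTotalDegree (Fin 2) ℝ n))).map
      (restrictTotalDegree (Fin 2) ℝ n).subtype := by
  rw [LinearMap.ker_domRestrict, Submodule.map_comap_subtype]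
  ext p
  simp [vanishSp, evalOn, funext_iff]

theorem range_evalOn_domRestrict_eq_top {n : ℕ} {X : Finset (ℝ × ℝ)} (hX : Indep n X) :
    LinearMap.range ((evalOn X).domRestrict (restrictTotalDegree (Fin 2) ℝ n)) = ⊤ := by
  rw [eq_top_iff, ← (Pi.basisFun ℝ X).span_eq, Submodule.span_le]
  rintro _ ⟨A, rfl⟩
  obtain ⟨p, hdeg, hA, hB⟩ := hX A A.2
  refine ⟨⟨p, (mem_restrictTotalDegree _ _ _).mpr hdeg⟩, funext fun B => ?_⟩
  by_cases hBA : B = A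
  · subst hBA
    simpa [evalOn, evalPt] using hA
  · simpa [evalOn, evalPt, Pi.single_apply, hBA] using hB B B.2 (Subtype.coe_ne_coe.mpr hBA)

instance (n : ℕ) (X : Finset (ℝ × ℝ)) : FiniteDimensional ℝ (vanishSp n X) :=
  Submodule.finiteDimensional_of_le inf_le_left

theorem finrank_vanishSp_add_card {n : ℕ} {X : Finset (ℝ × ℝ)} (hX : Indep n X) :
    finrank ℝ (vanishSp n X) + X.card = (n + 2).choose 2 := by
  have := LinearMap.finrank_range_add_finrank_ker
    ((evalOn X).domRestrict (restrictTotalDegree (Fin 2) ℝ n))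
  rw [range_evalOn_domRestrict_eq_top hX, finrank_top, finrank_fintype_fun_eq_card,
    Fintype.card_coe, finrank_restrictTotalDegree_fin_two] at this
  rw [vanishSp_eq_map_ker, Submodule.finrank_map_subtype_eq]
  omega

theorem stmt11_general (n k : ℕ) (hk : k ≤ n) (X : Finset (ℝ × ℝ))
    (hX : Indep n X) (hcard : X.card = dd n (k - 1) + 2)
    (p₁ p₂ : MvPolynomial (Fin 2) ℝ)
    (h₁ : p₁.totalDegree = k) (h₂ : p₂.totalDegree = k)
    (hv₁ : ∀ A ∈ X, evalPt p₁ A = 0) (hv₂ : ∀ A ∈ X, evalPt p₂ A = 0) :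
    ∃ c : ℝ, c ≠ 0 ∧ p₂ = c • p₁ := by
  obtain rfl | hk0 := Nat.eq_zero_or_pos k
  · obtain ⟨A, hA⟩ : X.Nonempty := card_pos.mp (by omega)
    rw [eq_zero_of_totalDegree_eq_zero h₁ (hv₁ A hA),
      eq_zero_of_totalDegree_eq_zero h₂ (hv₂ A hA)]
    exact ⟨1, one_ne_zero, (one_smul _ _).symm⟩
  have hp₁ : p₁ ≠ 0 := by rintro rfl; rw [totalDegree_zero] at h₁; omega
  have hp₂ : p₂ ≠ 0 := by rintro rfl; rw [totalDegree_zero] at h₂; omega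
  by_cases hdvd : p₂ ∣ p₁
  · exact exists_smul_eq_of_dvd_of_totalDegree_eq hp₁ hdvd (h₁.trans h₂.symm)
  have hlow := le_finrank_map_mulLeft_sup hp₂ hp₁ hdvd (n - k)
  have hup := Submodule.finrank_mono (sup_le (h₁ ▸ map_mulLeft_le_vanishSp (h₁ ▸ hk) hv₁)
    (h₂ ▸ map_mulLeft_le_vanishSp (h₂ ▸ hk) hv₂))
  have hdim := finrank_vanishSp_add_card hX
  have hdd := dd_add_choose_two (show k - 1 ≤ n by omega)
  rw [show n - (k - 1) = n - k + 1 by omega, Nat.add_one_choose_two (n - k + 2)] at hdd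
  omega

theorem stmt11 (n k : ℕ) (hk : k ≤ n) (X : Finset (ℝ × ℝ))
    (hX : Indep n X) (hcard : X.card = dd n (k - 1) + 2)
    (hcurve : ∃ q : MvPolynomial (Fin 2) ℝ, q.totalDegree = k ∧
      ∀ A ∈ X, evalPt q A = 0)
    (p₁ p₂ : MvPolynomial (Fin 2) ℝ)
    (h₁ : p₁.totalDegree = k) (h₂ : p₂.totalDegree = k)
    (hv₁ : ∀ A ∈ X, evalPt p₁ A = 0) (hv₂ : ∀ A ∈ X, evalPt p₂ A = 0) :
    ∃ c : ℝ, c ≠ 0 ∧ p₂ = c • p₁ :=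
  stmt11_general n k hk X hX hcard p₁ p₂ h₁ h₂ hv₁ hv₂
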